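/- arXiv:2212.09382 — 5 statements merged into one kernel-verified Lean document; each statement's English description precedes it below -/
import Mathlib

section
/- The GHZ empirical model is strongly contextual: there is no global outcome assignment g assigning a value in ℤ/2 to each of the six measurements X₁,X₂,X₃,Y₁,Y₂,Y₃ such that g(X₁)⊕g(X₂)⊕g(X₃)=0, g(X₁)⊕g(Y₂)⊕g(Y₃)=1, g(Y₁)⊕g(X₂)⊕g(Y₃)=1, and g(Y₁)⊕g(Y₂)⊕g(X₃)=1. -/
/-- The GHZ empirical model is strongly contextual: there is no global outcome
assignment in `ℤ/2` to the six measurements `X₁,X₂,X₃,Y₁,Y₂,Y₃` (given as the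
functions `gX gY : Fin 3 → ZMod 2`) satisfying the four GHZ parity equations. -/
theorem ghz_strongly_contextual :
    ¬ ∃ (gX gY : Fin 3 → ZMod 2),
      gX 0 + gX 1 + gX 2 = 0 ∧
      gX 0 + gY 1 + gY 2 = 1 ∧
      gY 0 + gX 1 + gY 2 = 1 ∧
      gY 0 + gY 1 + gX 2 = 1 := by
  rintro ⟨gX, gY, h1, h2, h3, h4⟩
  have key : (gX 0 + gX 1 + gX 2) + (gX 0 + gY 1 + gY 2) + (gY 0 + gX 1 + gY 2) + (gY 0 + gY 1 + gX 2) = 0 + 1 + 1 + 1 := by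
    rw [h1, h2, h3, h4]
  have sq : ∀ a : ZMod 2, a + a = 0 := by decide
  apply (by decide : (1:ZMod 2) ≠ 0)
  have lhs : (gX 0 + gX 1 + gX 2) + (gX 0 + gY 1 + gY 2) + (gY 0 + gX 1 + gY 2) + (gY 0 + gY 1 + gX 2) = 0 := by
    have := sq (gX 0); have := sq (gX 1); have := sq (gX 2)
    have := sq (gY 0); have := sq (gY 1); have := sq (gY 2)
    linear_combination this + sq (gX 0) + sq (gX 1) + sq (gX 2) + sq (gY 0) + sq (gY 1)
  rw [lhs] at key
  exact key.symm.trans (by decide)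
end

section
/- In a commutative partial monoid, if a trivialisation h : N → G × M of a G-bundle (N, j, θ) over M exists, then h is an isomorphism, with inverse (a, m) ↦ θ(a − h₁(η(m)), η(m)) for any section η : M → N of j, where h₁ = π₁ ∘ h; moreover this inverse is independent of the choice of section η. -/
/-- A commutative partial monoid: a partially defined (via `Option`) commutative,
associative addition with an identity element. -/
structure PCM (M : Type*) where
  padd : M → M → Option M
  zero : M
  comm : ∀ a b, padd a b = padd b a
  zero_add : ∀ a, padd zero a = some a
  assoc_eq : ∀ a b c ab bc abc abc', padd a b = some ab → padd b c = some bc →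
    padd ab c = some abc → padd a bc = some abc' → abc = abc'
  assoc_def : ∀ a b c ab ac bc, padd a b = some ab → padd a c = some ac →
    padd b c = some bc → (padd ab c).isSome ∧ (padd a bc).isSome

/-- A commutative group regarded as a (total) commutative partial monoid. -/
def PCM.ofAddCommGroup (G : Type*) [AddCommGroup G] : PCM G where
  padd a b := some (a + b)
  zero := 0
  comm a b := by exact congrArg some (add_comm a b)
  zero_add a := by exact congrArg some (_root_.zero_add a)
  assoc_eq a b c ab bc abc abc' h1 h2 h3 h4 := by
    simp only [Option.some.injEq] at h1 h2 h3 h4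
    subst h1; subst h2; subst h3; subst h4; exact add_assoc a b c
  assoc_def a b c ab ac bc _ _ _ := ⟨rfl, rfl⟩

/-- A homomorphism of commutative partial monoids: preserves the identity and all
defined sums. -/
def PCM.IsHom {M N : Type*} (P : PCM M) (Q : PCM N) (h : M → N) : Prop :=
  h P.zero = Q.zero ∧ ∀ a b ab, P.padd a b = some ab → Q.padd (h a) (h b) = some (h ab)

/-- A compatible action of a commutative group `G` on a commutative partial monoid:
a group action which is a homomorphism `G × M → M` of partial monoids. -/
structure PCMAction {M : Type*} (G : Type*) [AddCommGroup G] (P : PCM M) where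
  θ : G → M → M
  act_zero : ∀ m, θ 0 m = m
  act_add : ∀ g g' m, θ (g + g') m = θ g (θ g' m)
  act_hom : ∀ g g' m m' mm', P.padd m m' = some mm' →
    P.padd (θ g m) (θ g' m') = some (θ (g + g') mm')

/-- A `G`-bundle over a commutative partial monoid `M`: a partial monoid `N` with a
free compatible `G`-action and a surjective homomorphism `j : N → M` whose fibers
are exactly the orbits of the action. -/
structure PCMBundle {M N : Type*} (G : Type*) [AddCommGroup G] (P : PCM M) (Q : PCM N) where
  act : PCMAction G Q
  free : ∀ g g' n, act.θ g n = act.θ g' n → g = g'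
  j : N → M
  j_surj : Function.Surjective j
  j_hom : PCM.IsHom Q P j
  fiber_orbit : ∀ n n', j n = j n' ↔ ∃ g, act.θ g n = n'

variable {M N G : Type*} [AddCommGroup G] {P : PCM M} {Q : PCM N}

/-- A left splitting of a bundle: a homomorphism `l : N → G` intertwining the bundle
action with the translation action of `G` on itself. -/
def PCMBundle.IsLeftSplitting (B : PCMBundle G P Q) (l : N → G) : Prop :=
  Q.IsHom (PCM.ofAddCommGroup G) l ∧ ∀ g n, l (B.act.θ g n) = g + l n

/-- A right splitting of a bundle: a homomorphism `r : M → N` with `j ∘ r = id`. -/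
def PCMBundle.IsRightSplitting (B : PCMBundle G P Q) (r : M → N) : Prop :=
  P.IsHom Q r ∧ ∀ m, B.j (r m) = m

/-- A trivialisation of a bundle: a homomorphism `h : N → G × M` (into the product
bundle) intertwining the actions and satisfying `π₂ ∘ h = j`. -/
def PCMBundle.IsTrivialisation (B : PCMBundle G P Q) (h : N → G × M) : Prop :=
  (h Q.zero = (0, P.zero)) ∧
  (∀ a b ab, Q.padd a b = some ab →
    (h ab).1 = (h a).1 + (h b).1 ∧ P.padd (h a).2 (h b).2 = some ((h ab).2)) ∧
  (∀ g n, h (B.act.θ g n) = (g + (h n).1, (h n).2)) ∧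
  (∀ n, (h n).2 = B.j n)

/-- A trivialisation of a `G`-bundle over a commutative partial monoid is an
isomorphism, with two-sided inverse `(a, m) ↦ θ(a − h₁(η m), η m)` for any
set-theoretic section `η` of `j`; moreover this inverse is independent of the
choice of section. -/
theorem trivialisation_isIso (B : PCMBundle G P Q) (h : N → G × M)
    (hh : B.IsTrivialisation h)
    (η η' : M → N) (hη : ∀ m, B.j (η m) = m) (hη' : ∀ m, B.j (η' m) = m) :
    Function.LeftInverse (fun p : G × M => B.act.θ (p.1 - (h (η p.2)).1) (η p.2)) h ∧
    Function.RightInverse (fun p : G × M => B.act.θ (p.1 - (h (η p.2)).1) (η p.2)) h ∧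
    (fun p : G × M => B.act.θ (p.1 - (h (η p.2)).1) (η p.2)) =
      (fun p : G × M => B.act.θ (p.1 - (h (η' p.2)).1) (η' p.2)) := by
  obtain ⟨h0, hadd, hact, hj⟩ := hh
  refine ⟨?_, ?_, ?_⟩
  · intro n
    simp only [hj]
    obtain ⟨g, hg⟩ := (B.fiber_orbit (η (B.j n)) n).mp (hη (B.j n))
    have h1 : (h n).1 = g + (h (η (B.j n))).1 := by conv_lhs => rw [← hg, hact]
    rw [h1]
    simp only [add_sub_cancel_right]
    exact hg
  · intro p
    have := hact (p.1 - (h (η p.2)).1) (η p.2)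
    rw [this]
    have h2 : (h (η p.2)).2 = p.2 := by rw [hj, hη]
    ext <;> simp [h2]
  · funext p
    obtain ⟨g, hg⟩ := (B.fiber_orbit (η p.2) (η' p.2)).mp (by rw [hη, hη'])
    have h1 : (h (η' p.2)).1 = g + (h (η p.2)).1 := by rw [← hg, hact]
    rw [h1, ← hg, ← B.act.act_add]
    congr 1
    abel
end

section
/- In any non-contextual model for the CHSH scenario, the probability of satisfying the CHSH condition is at most 3/4, while the quantum CHSH model achieves cos²(π/8) ≈ 0.85 > 3/4. -/
open Real

noncomputable section

/-- Success probability of a non-contextual (local hidden variable) model for the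
CHSH game: a probability distribution `p` over global deterministic assignments
(a pair of functions giving Alice's and Bob's outcome for each of their two
settings), with the four contexts chosen uniformly and winning condition
`x₁ ⊕ x₂ = y₁ ∧ y₂`. -/
def chshClassicalValue (p : ((ZMod 2 → ZMod 2) × (ZMod 2 → ZMod 2)) → ℝ) : ℝ :=
  (1 / 4) * ∑ x : ZMod 2, ∑ y : ZMod 2,
    ∑ l : (ZMod 2 → ZMod 2) × (ZMod 2 → ZMod 2),
      p l * (if l.1 x + l.2 y = x * y then 1 else 0)

/-- The maximally entangled state `(|00⟩ + |11⟩)/√2`. -/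
def chshState : ZMod 2 → ZMod 2 → ℂ := fun j k =>
  if j = k then ((1 / Real.sqrt 2 : ℝ) : ℂ) else 0

/-- Alice's measurement bases: setting `0` is the `Z` basis, setting `1` the `X`
basis. `chshAliceBasis x o` is the basis vector for setting `x`, outcome `o`. -/
def chshAliceBasis : ZMod 2 → ZMod 2 → ZMod 2 → ℂ := fun x o j =>
  if x = 0 then (if j = o then 1 else 0)
  else ((1 / Real.sqrt 2 : ℝ) : ℂ) * (if j = 0 then 1 else (-1 : ℂ) ^ o.val)

/-- Bob's measurement bases, rotated by `π/8`: setting `0` is the basis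
`a₀ = cos(π/8)|0⟩ + sin(π/8)|1⟩`, `a₁ = −sin(π/8)|0⟩ + cos(π/8)|1⟩`; setting `1`
is `b₀ = cos(π/8)|0⟩ − sin(π/8)|1⟩`, `b₁ = sin(π/8)|0⟩ + cos(π/8)|1⟩`. -/
def chshBobBasis : ZMod 2 → ZMod 2 → ZMod 2 → ℂ := fun y o j =>
  if y = 0 then
    (if o = 0 then (if j = 0 then ((cos (π / 8) : ℝ) : ℂ) else ((sin (π / 8) : ℝ) : ℂ))
     else (if j = 0 then ((-sin (π / 8) : ℝ) : ℂ) else ((cos (π / 8) : ℝ) : ℂ)))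
  else
    (if o = 0 then (if j = 0 then ((cos (π / 8) : ℝ) : ℂ) else ((-sin (π / 8) : ℝ) : ℂ))
     else (if j = 0 then ((sin (π / 8) : ℝ) : ℂ) else ((cos (π / 8) : ℝ) : ℂ)))

/-- The Born amplitude for outcomes `(o₁, o₂)` with settings `(x, y)`. -/
def chshAmp (x y o₁ o₂ : ZMod 2) : ℂ :=
  ∑ j : ZMod 2, ∑ k : ZMod 2,
    (starRingEnd ℂ) (chshAliceBasis x o₁ j) * (starRingEnd ℂ) (chshBobBasis y o₂ k) *
      chshState j k

/-- The quantum success probability of the CHSH model. -/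
def chshQuantumValue : ℝ :=
  (1 / 4) * ∑ x : ZMod 2, ∑ y : ZMod 2, ∑ o₁ : ZMod 2, ∑ o₂ : ZMod 2,
    (if o₁ + o₂ = x * y then ‖chshAmp x y o₁ o₂‖ ^ 2 else 0)


lemma chsh_sumZ {M : Type*} [AddCommMonoid M] (f : ZMod 2 → M) :
    ∑ x : ZMod 2, f x = f 0 + f 1 := by
  rw [show (Finset.univ : Finset (ZMod 2)) = {0,1} by decide,
    Finset.sum_insert (by decide), Finset.sum_singleton]

lemma chsh_key (a0 a1 b0 b1 : ZMod 2) :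
    ((if a0+b0=0 then (1:ℝ) else 0) + (if a0+b1=0 then 1 else 0) +
      (if a1+b0=0 then 1 else 0) + (if a1+b1=1 then 1 else 0)) ≤ 3 := by
  have key : ¬(a0+b0=0 ∧ a0+b1=0 ∧ a1+b0=0 ∧ a1+b1=1) := by
    revert a0 a1 b0 b1; decide
  split_ifs with h1 h2 h3 h4 <;> norm_num
  exact key ⟨h1,h2,h3,h4⟩

/-- Any non-contextual model for the CHSH scenario satisfies the CHSH condition
with probability at most `3/4`, while the quantum CHSH model achieves
`cos²(π/8) ≈ 0.85 > 3/4`. -/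
theorem chsh_contextual :
    (∀ p : ((ZMod 2 → ZMod 2) × (ZMod 2 → ZMod 2)) → ℝ,
      (∀ l, 0 ≤ p l) → (∑ l, p l = 1) → chshClassicalValue p ≤ 3 / 4) ∧
    chshQuantumValue = cos (π / 8) ^ 2 ∧
    (3 / 4 : ℝ) < cos (π / 8) ^ 2 := by
  refine ⟨?_, ?_, ?_⟩
  · intro p hp hsum
    have hval : chshClassicalValue p =
        (1/4) * ∑ l : (ZMod 2 → ZMod 2) × (ZMod 2 → ZMod 2),
          p l * ((if l.1 0 + l.2 0 = 0 then (1:ℝ) else 0) +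
            (if l.1 0 + l.2 1 = 0 then 1 else 0) +
            (if l.1 1 + l.2 0 = 0 then 1 else 0) +
            (if l.1 1 + l.2 1 = 1 then 1 else 0)) := by
      unfold chshClassicalValue
      rw [chsh_sumZ]
      rw [chsh_sumZ (fun y => ∑ l : (ZMod 2 → ZMod 2) × (ZMod 2 → ZMod 2),
        p l * (if l.1 0 + l.2 y = 0 * y then (1:ℝ) else 0))]
      rw [chsh_sumZ (fun y => ∑ l : (ZMod 2 → ZMod 2) × (ZMod 2 → ZMod 2),
        p l * (if l.1 1 + l.2 y = 1 * y then (1:ℝ) else 0))]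
      rw [← Finset.sum_add_distrib, ← Finset.sum_add_distrib, ← Finset.sum_add_distrib]
      congr 1
      apply Finset.sum_congr rfl
      intro l _
      norm_num [mul_add]
      ring
    rw [hval]
    have hb : ∑ l : (ZMod 2 → ZMod 2) × (ZMod 2 → ZMod 2),
        p l * ((if l.1 0 + l.2 0 = 0 then (1:ℝ) else 0) +
          (if l.1 0 + l.2 1 = 0 then 1 else 0) +
          (if l.1 1 + l.2 0 = 0 then 1 else 0) +
          (if l.1 1 + l.2 1 = 1 then 1 else 0)) ≤
        ∑ l : (ZMod 2 → ZMod 2) × (ZMod 2 → ZMod 2), p l * 3 := by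
      apply Finset.sum_le_sum
      intro l _
      exact mul_le_mul_of_nonneg_left (chsh_key _ _ _ _) (hp l)
    calc (1/4 : ℝ) * ∑ l : (ZMod 2 → ZMod 2) × (ZMod 2 → ZMod 2),
          p l * ((if l.1 0 + l.2 0 = 0 then (1:ℝ) else 0) +
            (if l.1 0 + l.2 1 = 0 then 1 else 0) +
            (if l.1 1 + l.2 0 = 0 then 1 else 0) +
            (if l.1 1 + l.2 1 = 1 then 1 else 0))
        ≤ (1/4) * ∑ l : (ZMod 2 → ZMod 2) × (ZMod 2 → ZMod 2), p l * 3 := by linarith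
      _ = 3/4 := by rw [← Finset.sum_mul, hsum]; norm_num
  · simp only [chshQuantumValue, chshAmp, chsh_sumZ, chshState, chshAliceBasis, chshBobBasis]
    norm_num [show (0:ZMod 2) ≠ 1 from by decide, show (1:ZMod 2) ≠ 0 from by decide,
      show (1:ZMod 2)+1 = 0 from rfl, show (0:ZMod 2) + 1 = 1 from rfl,
      show (1:ZMod 2)+0 = 1 from rfl]
    simp only [show ((2:ZMod 2)) = 0 from by decide, show ZMod.val (1 : ZMod 2) = 1 from rfl,
      map_ofNat, if_true, pow_one]
    norm_num
    simp only [← Complex.ofReal_ofNat, ← Complex.ofReal_inv, ← Complex.ofReal_div,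
      ← Complex.ofReal_mul, ← Complex.ofReal_neg, ← Complex.ofReal_add, Complex.norm_real, Real.norm_eq_abs,
      sq_abs]
    have h2 : Real.sqrt 2 ^ 2 = 2 := Real.sq_sqrt (by norm_num)
    have hp : Real.sqrt (2 + Real.sqrt 2) ^ 2 = 2 + Real.sqrt 2 := Real.sq_sqrt (by positivity)
    have hm : Real.sqrt (2 - Real.sqrt 2) ^ 2 = 2 - Real.sqrt 2 := by
      refine Real.sq_sqrt ?_
      nlinarith [Real.sq_sqrt (by norm_num : (0:ℝ) ≤ 2), Real.sqrt_nonneg 2]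
    have hprod : Real.sqrt (2 + Real.sqrt 2) * Real.sqrt (2 - Real.sqrt 2) = Real.sqrt 2 := by
      rw [← Real.sqrt_mul (by positivity)]
      have : (2 + Real.sqrt 2) * (2 - Real.sqrt 2) = 2 := by
        nlinarith [Real.sq_sqrt (by norm_num : (0:ℝ) ≤ 2)]
      rw [this]
    have h4 : Real.sqrt 2 ^ 4 = 4 := by nlinarith [h2]
    have hi2 : (Real.sqrt 2)⁻¹ ^ 2 = 1/2 := by rw [inv_pow, h2]; norm_num
    have hi4 : (Real.sqrt 2)⁻¹ ^ 4 = 1/4 := by rw [inv_pow, h4]; norm_num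
    rw [abs_of_nonneg (Real.sqrt_nonneg 2)]
    ring_nf
    rw [abs_of_nonneg (Real.sqrt_nonneg (2 + Real.sqrt 2)), hi2, hi4]
    linear_combination (-(1/16) : ℝ) * hp + (1/16 : ℝ) * hm + (1/8 : ℝ) * hprod
  · rw [Real.cos_pi_div_eight]
    have h2 : Real.sqrt 2 ^ 2 = 2 := Real.sq_sqrt (by norm_num)
    have hp : Real.sqrt (2 + Real.sqrt 2) ^ 2 = 2 + Real.sqrt 2 := Real.sq_sqrt (by positivity)
    nlinarith [Real.sqrt_nonneg 2, Real.sqrt_nonneg (2 + Real.sqrt 2)]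

end
end

section
/- Resource inequality for non-local games: if Φ is a game whose success probability for every non-contextual empirical model is at most γ, then for every empirical model e, p_S(e, Φ) ≤ γ + CF(e), where CF(e) is the contextual fraction of e. -/
/-- Resource inequality for non-local games. Empirical models are represented as
elements of a real function space, with a set `Models` of all empirical models,
a subset `NC` of non-contextual ones, and an affine success-probability
functional `pS` bounded by `1` on models and by `γ` on non-contextual models.
The non-contextual fraction `NCF(e)` is the supremum of the weights `ε` of
decompositions `e = ε • e_NC + (1−ε) • e'`, and `CF(e) = 1 − NCF(e)`.
Then for every empirical model `e`, `pS(e) ≤ γ + CF(e)`. -/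
theorem resource_inequality {ι : Type*} (Models NC : Set (ι → ℝ))
    (hNCM : NC ⊆ Models) (hNCne : NC.Nonempty)
    (pS : (ι → ℝ) → ℝ) (γ : ℝ) (hγ0 : 0 ≤ γ)
    (haff : ∀ e₁ ∈ Models, ∀ e₂ ∈ Models, ∀ t : ℝ, 0 ≤ t → t ≤ 1 →
      t • e₁ + (1 - t) • e₂ ∈ Models ∧
      pS (t • e₁ + (1 - t) • e₂) = t * pS e₁ + (1 - t) * pS e₂)
    (hle1 : ∀ e ∈ Models, pS e ≤ 1)
    (hNC : ∀ e ∈ NC, pS e ≤ γ) :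
    ∀ e ∈ Models,
      pS e ≤ γ + (1 - sSup {ε : ℝ | 0 ≤ ε ∧ ε ≤ 1 ∧
        ∃ eNC ∈ NC, ∃ e' ∈ Models, e = ε • eNC + (1 - ε) • e'}) := by
  intro e he
  have hsup : sSup {ε : ℝ | 0 ≤ ε ∧ ε ≤ 1 ∧
      ∃ eNC ∈ NC, ∃ e' ∈ Models, e = ε • eNC + (1 - ε) • e'} ≤ γ + 1 - pS e := by
    apply Real.sSup_le
    · rintro x ⟨hx0, hx1, eNC, heNC, e', he', hdec⟩
      have haff' := (haff eNC (hNCM heNC) e' he' x hx0 hx1).2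
      rw [← hdec] at haff'
      have h1 : pS eNC ≤ γ := hNC eNC heNC
      have h2 : pS e' ≤ 1 := hle1 e' he'
      nlinarith
    · have := hle1 e he
      linarith
  linarith
end

section
/- If a deterministic single-round simulation (f, g) from measurement scenario S to measurement scenario T is applied to a non-contextual empirical model e on S, then the pushforward (f,g)_*(e) is a non-contextual empirical model on T. -/
open scoped Classical

/-- A (possibly signalling) probabilistic empirical model
`e : (C : Set X) → ((C → Oc) → ℝ)` on a measurement scenario with measurements
`X`, cover `Cov` and outcomes `Oc` is non-contextual if it arises as the family
of marginals, on each context of the cover, of a single probability distribution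
`d` on global assignments `X → Oc`. -/
def NonContextualModel {X Oc : Type*} [Fintype X] [Fintype Oc]
    (Cov : Set (Set X)) (e : (C : Set X) → ((C → Oc) → ℝ)) : Prop :=
  ∃ d : (X → Oc) → ℝ, (∀ g, 0 ≤ d g) ∧ (∑ g, d g = 1) ∧
    ∀ C ∈ Cov, ∀ s : C → Oc,
      e C s = ∑ g : X → Oc, if (fun x : C => g x) = s then d g else 0

/-- The pushforward of an empirical model along a deterministic single-round
simulation `(f, gm)`: each measurement `y` of the target scenario is translated
to the context `f y` of the source, and outcomes are translated by `gm`. -/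
noncomputable def pushforwardModel {X Y Oc Pc : Type*} [Fintype X] [Fintype Oc]
    (f : Y → Set X) (gm : (y : Y) → ((f y → Oc) → Pc))
    (e : (C : Set X) → ((C → Oc) → ℝ)) :
    (C : Set Y) → ((C → Pc) → ℝ) := fun C t =>
  ∑ s : (⋃ y ∈ C, f y : Set X) → Oc,
    if (fun y : C => gm y.1 (fun x => s ⟨x.1, Set.mem_biUnion y.2 x.2⟩)) = t
    then e (⋃ y ∈ C, f y) s else 0

lemma aux_ite_sum {α : Type*} (p : Prop) [Decidable p] (s : Finset α) (f : α → ℝ) :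
    (if p then ∑ x ∈ s, f x else 0) = ∑ x ∈ s, if p then f x else 0 := by
  split <;> simp

set_option maxHeartbeats 1000000 in
/-- Applying a deterministic single-round simulation to a non-contextual
empirical model yields a non-contextual empirical model. -/
theorem pushforward_nonContextual {X Y Oc Pc : Type*}
    [Fintype X] [Fintype Y] [Fintype Oc] [Fintype Pc]
    (CovS : Set (Set X)) (CovT : Set (Set Y))
    (f : Y → Set X) (hf1 : ∀ y, f y ∈ CovS)
    (hf2 : ∀ C ∈ CovT, (⋃ y ∈ C, f y) ∈ CovS)
    (gm : (y : Y) → ((f y → Oc) → Pc))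
    (e : (C : Set X) → ((C → Oc) → ℝ))
    (he : NonContextualModel CovS e) :
    NonContextualModel CovT (pushforwardModel f gm e) := by
  classical
  obtain ⟨d, hd0, hd1, hmarg⟩ := he
  set F : (X → Oc) → (Y → Pc) := fun g y => gm y (fun x => g x.1) with hF
  refine ⟨fun h => ∑ g, if F g = h then d g else 0, ?_, ?_, ?_⟩
  · intro h
    refine Finset.sum_nonneg fun g _ => ?_
    split
    · exact hd0 g
    · exact le_refl 0
  · rw [Finset.sum_comm]
    calc ∑ g, ∑ h, (if F g = h then d g else 0)
        = ∑ g, d g := by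
          refine Finset.sum_congr rfl fun g _ => ?_
          simp
      _ = 1 := hd1
  · intro C hC t
    simp only [pushforwardModel]
    have hU := hf2 C hC
    simp only [hmarg _ hU, aux_ite_sum]
    rw [Finset.sum_comm]
    trans (∑ g : X → Oc,
        if (fun y : C => gm y.1 (fun x => g x.1)) = t then d g else 0)
    · refine Finset.sum_congr rfl fun g _ => ?_
      rw [Finset.sum_eq_single (fun x : (⋃ y ∈ C, f y : Set X) => g x.1)]
      · rw [if_pos (rfl : (fun x : (⋃ y ∈ C, f y : Set X) => g x.1) = _)]
      · intro s _ hs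
        rw [if_neg (Ne.symm hs), ite_self]
      · intro h2
        simp only [Finset.mem_univ, not_true_eq_false] at h2
    · symm
      rw [Finset.sum_comm]
      refine Finset.sum_congr rfl fun g _ => ?_
      rw [Finset.sum_eq_single (F g)]
      · rw [if_pos (rfl : F g = _)]
      · intro h _ hh
        rw [if_neg (Ne.symm hh), ite_self]
      · intro h2
        exact absurd (Finset.mem_univ _) h2
end
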